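/- Let V be a finite-dimensional complex vector space, F, G, μ invertible linear operators on V, S the swap operator on V ⊗ V, and R = (F ⊗ G) ∘ S. If Tr₂(R ∘ (μ ⊗ μ)) = μ, where Tr₂ denotes the partial trace over the second tensor factor, then μ F μ G = μ, and hence μ⁻¹ = G F. -/

import Mathlib

open TensorProduct

variable {V : Type*} [AddCommGroup V] [Module ℂ V]

/-- The swap operator `S : a ⊗ b ↦ b ⊗ a`. -/
noncomputable def swapOp : Module.End ℂ (V ⊗[ℂ] V) :=
  (TensorProduct.comm ℂ V V).toLinearMap

/-! Expanding the swap as `S = ∑ᵢⱼ Eⱼᵢ ⊗ Eᵢⱼ` in matrix units gives `Tr₂((A ⊗ B) ∘ S) = A B`. Since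
`(F ⊗ G) ∘ S ∘ (μ ⊗ μ) = (Fμ ⊗ Gμ) ∘ S`, the hypothesis says `Fμ Gμ = μ`, i.e. `FμG = 1` in the group
of units, from which both conclusions are group identities. -/

section

variable {R M : Type*} [CommRing R] [AddCommGroup M] [Module R M]

theorem mul_dualTensorHom (B : Module.End R M) (f : Module.Dual R M) (v : M) :
    B * dualTensorHom R M M (f ⊗ₜ v) = dualTensorHom R M M (f ⊗ₜ B v) := by
  ext x
  simp [dualTensorHom_apply]

namespace Module.Basis

variable {ι : Type*} [Fintype ι] (b : Basis ι R M)

theorem sum_coord_smul_dualTensorHom (B : Module.End R M) :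
    ∑ i, ∑ j, b.coord i (B (b j)) • dualTensorHom R M M (b.coord j ⊗ₜ b i) = B := by
  refine b.ext fun k => ?_
  classical
  simp [Finsupp.single_apply, b.sum_repr]

theorem comm_eq_sum_map_dualTensorHom :
    (TensorProduct.comm R M M).toLinearMap = ∑ i, ∑ j,
      map (dualTensorHom R M M (b.coord j ⊗ₜ b i)) (dualTensorHom R M M (b.coord i ⊗ₜ b j)) := by
  refine TensorProduct.ext' fun x y => ?_
  conv_lhs => rw [LinearEquiv.coe_coe, comm_tmul, ← b.sum_repr x, ← b.sum_repr y, sum_tmul]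
  simp only [tmul_sum, LinearMap.sum_apply, map_tmul, dualTensorHom_apply, coord_apply,
    smul_tmul, tmul_smul]
  exact Finset.sum_congr rfl fun i _ => Finset.sum_congr rfl fun j _ => smul_comm _ _ _

end Module.Basis

theorem partialTrace_map_mul_comm [Module.Free R M] [Module.Finite R M]
    {T : Module.End R (M ⊗[R] M) →ₗ[R] Module.End R M}
    (hT : ∀ A B : Module.End R M, T (map A B) = LinearMap.trace R M B • A)
    (A B : Module.End R M) :
    T (map A B * (TensorProduct.comm R M M).toLinearMap) = A * B := by
  let b := Module.Free.chooseBasis R M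
  calc T (map A B * (TensorProduct.comm R M M).toLinearMap)
      = ∑ i, ∑ j, b.coord i (B (b j)) • (A * dualTensorHom R M M (b.coord j ⊗ₜ b i)) := by
        simp only [b.comm_eq_sum_map_dualTensorHom, Finset.mul_sum, ← TensorProduct.map_mul,
          map_sum, hT, mul_dualTensorHom, LinearMap.trace_eq_contract_apply, contractLeft_apply]
    _ = A * B := by
        simp only [← mul_smul_comm, ← Finset.mul_sum, b.sum_coord_smul_dualTensorHom]

end

theorem mul_mul_mul_eq_self_and_inv_eq {G : Type*} [Group G] {f g m : G}
    (h : f * m * (g * m) = m) : m * f * m * g = m ∧ m⁻¹ = g * f := by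
  have hfmg : f * m * g = 1 := mul_right_cancel (by rwa [one_mul, mul_assoc (f * m)])
  refine ⟨by rw [mul_assoc m f, mul_assoc m, hfmg, mul_one], inv_eq_of_mul_eq_one_right ?_⟩
  rw [← mul_assoc, mul_eq_one_comm, ← mul_assoc, hfmg]

theorem stmt6 [FiniteDimensional ℂ V] (F G μ : (Module.End ℂ V)ˣ)
    (T : Module.End ℂ (V ⊗[ℂ] V) →ₗ[ℂ] Module.End ℂ V)
    (hT : ∀ A B : Module.End ℂ V,
      T (TensorProduct.map A B) = LinearMap.trace ℂ V B • A)
    (hptr : T ((TensorProduct.map (F : Module.End ℂ V) (G : Module.End ℂ V) * swapOp) *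
        TensorProduct.map (μ : Module.End ℂ V) (μ : Module.End ℂ V)) = μ) :
    (μ : Module.End ℂ V) * F * μ * G = μ ∧
      ((μ⁻¹ : (Module.End ℂ V)ˣ) : Module.End ℂ V) = (G : Module.End ℂ V) * F := by
  have hR : map (F : Module.End ℂ V) G * swapOp * map (μ : Module.End ℂ V) μ
      = map ((F * μ : (Module.End ℂ V)ˣ) : Module.End ℂ V) (G * μ : (Module.End ℂ V)ˣ) * swapOp :=
    TensorProduct.ext' fun _ _ => rfl
  rw [hR, swapOp, partialTrace_map_mul_comm hT] at hptr
  have key : F * μ * (G * μ) = μ := Units.ext hptr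
  obtain ⟨h₁, h₂⟩ := mul_mul_mul_eq_self_and_inv_eq key
  exact ⟨congrArg Units.val h₁, congrArg Units.val h₂⟩
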